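/- There is no binary q-analog of the Fano plane (STS_2(7)) invariant under the group generated by the 7×7 matrix A_{7,3} over GF(2) with rows (0,1,0,0,0,0,0),(1,1,0,0,0,0,0),(0,0,0,1,0,0,0),(0,0,1,1,0,0,0),(0,0,0,0,1,0,0),(0,0,0,0,0,1,0),(0,0,0,0,0,0,1). -/
import Mathlib

/-- The action of a matrix `A` on subspaces of `GF(2)^v`, induced by the
right action `x ↦ x ⬝ A` on vectors. -/
def mapMat {v : ℕ} (A : Matrix (Fin v) (Fin v) (ZMod 2))
    (W : Submodule (ZMod 2) (Fin v → ZMod 2)) : Submodule (ZMod 2) (Fin v → ZMod 2) :=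
  W.map A.vecMulLinear

/-- A binary q-Steiner triple system `STS_2(v)`. -/
def IsSTS (v : ℕ) (D : Set (Submodule (ZMod 2) (Fin v → ZMod 2))) : Prop :=
  (∀ B ∈ D, Module.finrank (ZMod 2) B = 3) ∧
  ∀ L : Submodule (ZMod 2) (Fin v → ZMod 2), Module.finrank (ZMod 2) L = 2 →
    ∃! B, B ∈ D ∧ L ≤ B

/-- The matrix `A_{7,3}` over `GF(2)`. -/
def A73mat : Matrix (Fin 7) (Fin 7) (ZMod 2) :=
  !![0,1,0,0,0,0,0;
     1,1,0,0,0,0,0;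
     0,0,0,1,0,0,0;
     0,0,1,1,0,0,0;
     0,0,0,0,1,0,0;
     0,0,0,0,0,1,0;
     0,0,0,0,0,0,1]

/-- `A_{7,3}` as an element of `GL(7,2)` (it has order 3). -/
def A73 : GL (Fin 7) (ZMod 2) := ⟨A73mat, A73mat * A73mat, by decide, by decide⟩

open Matrix
set_option maxRecDepth 100000
set_option maxHeartbeats 1000000

abbrev V7 := Fin 7 → ZMod 2

lemma addself (a : V7) : a + a = 0 := by
  funext i
  simp only [Pi.add_apply, Pi.zero_apply]
  generalize a i = c
  revert c; decide

/-- the fixed space of A73 -/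
def Fsub : Submodule (ZMod 2) V7 where
  carrier := {x | x 0 = 0 ∧ x 1 = 0 ∧ x 2 = 0 ∧ x 3 = 0}
  add_mem' := by
    rintro a b ⟨a0, a1, a2, a3⟩ ⟨b0, b1, b2, b3⟩
    refine ⟨?_, ?_, ?_, ?_⟩ <;> simp_all [Pi.add_apply]
  zero_mem' := by simp
  smul_mem' := by
    rintro c x ⟨a0, a1, a2, a3⟩
    refine ⟨?_, ?_, ?_, ?_⟩ <;> simp_all [Pi.smul_apply]

/-- the complementary invariant space -/
def Ksub : Submodule (ZMod 2) V7 where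
  carrier := {x | x 4 = 0 ∧ x 5 = 0 ∧ x 6 = 0}
  add_mem' := by
    rintro a b ⟨a0, a1, a2⟩ ⟨b0, b1, b2⟩
    refine ⟨?_, ?_, ?_⟩ <;> simp_all [Pi.add_apply]
  zero_mem' := by simp
  smul_mem' := by
    rintro c x ⟨a0, a1, a2⟩
    refine ⟨?_, ?_, ?_⟩ <;> simp_all [Pi.smul_apply]

instance : DecidablePred (· ∈ Fsub) := fun x =>
  inferInstanceAs (Decidable (x 0 = 0 ∧ x 1 = 0 ∧ x 2 = 0 ∧ x 3 = 0))

instance : DecidablePred (· ∈ Ksub) := fun x =>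
  inferInstanceAs (Decidable (x 4 = 0 ∧ x 5 = 0 ∧ x 6 = 0))

lemma FK0 : ∀ x : V7, x ∈ Fsub → x ∈ Ksub → x = 0 := by
  rintro x ⟨a0, a1, a2, a3⟩ ⟨b0, b1, b2⟩
  funext i; fin_cases i <;> assumption

/-- the span of two vectors over GF(2), as an explicit submodule -/
def pairSub (a b : V7) : Submodule (ZMod 2) V7 where
  carrier := {x | x = 0 ∨ x = a ∨ x = b ∨ x = a + b}
  zero_mem' := Or.inl rfl
  add_mem' := by
    have h2n : ∀ x : V7, (2 : ℕ) • x = 0 := fun x => by rw [two_nsmul]; exact addself x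
    have h2z : ∀ x : V7, (2 : ℤ) • x = 0 := fun x => by rw [two_zsmul]; exact addself x
    have h2m : ∀ x : V7, (2 : V7) * x = 0 := fun x => by
      have : (2 : V7) = 1 + 1 := by norm_num
      rw [this, add_mul, one_mul]; exact addself x
    rintro x y (rfl | rfl | rfl | rfl) (rfl | rfl | rfl | rfl) <;>
      simp only [Set.mem_setOf_eq] <;> try abel_nf
    all_goals simp [h2n, h2z, h2m] <;> try abel_nf
    all_goals tauto
  smul_mem' := by
    intro c x hx
    have hc : c = 0 ∨ c = 1 := by revert c; decide
    rcases hc with rfl | rfl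
    · left; simp
    · simpa using hx

lemma mem_pairSub {a b x : V7} : x ∈ pairSub a b ↔ (x = 0 ∨ x = a ∨ x = b ∨ x = a + b) :=
  Iff.rfl

lemma pairSub_rot (a b : V7) : pairSub b (a + b) = pairSub a b := by
  have h : b + (a + b) = a := by rw [add_comm a b, ← add_assoc, addself, zero_add]
  apply SetLike.ext
  intro x
  rw [mem_pairSub, mem_pairSub, h]
  tauto

-- card/finrank machinery
lemma card_eq_two_pow_finrank (W : Submodule (ZMod 2) V7) :
    Nat.card ↥W = 2 ^ Module.finrank (ZMod 2) W := by
  have : Fintype ↥W := Fintype.ofFinite _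
  rw [Nat.card_eq_fintype_card]
  have h := Module.card_eq_pow_finrank (K := ZMod 2) (V := ↥W)
  simpa [ZMod.card] using h

lemma finrank_eq_of_card {W : Submodule (ZMod 2) V7} {n : ℕ}
    (h : Nat.card ↥W = 2 ^ n) : Module.finrank (ZMod 2) W = n := by
  have := card_eq_two_pow_finrank W
  exact Nat.pow_right_injective le_rfl (by simp only; rw [← this, h])

lemma ncard_coe (W : Submodule (ZMod 2) V7) : (W : Set V7).ncard = Nat.card ↥W := by
  rw [← Nat.card_coe_set_eq]
  rfl

lemma coe_pairSub (a b : V7) : (pairSub a b : Set V7) = {0, a, b, a + b} := by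
  ext x
  simp [SetLike.mem_coe, mem_pairSub, Set.mem_insert_iff, Set.mem_singleton_iff]

lemma ncard_pairSub {a b : V7} (ha : a ≠ 0) (hb : b ≠ 0) (hab : a ≠ b) :
    Nat.card ↥(pairSub a b) = 4 := by
  have hab0 : a + b ≠ 0 := fun h => hab (by
    have := congrArg (fun y => a + y) h
    simpa [← add_assoc, addself] using this.symm)
  have haba : a + b ≠ a := fun h => hb (by
    have := congrArg (fun y => a + y) h
    simpa [← add_assoc, addself] using this)
  have habb : a + b ≠ b := fun h => ha (by
    have := congrArg (fun y => y + b) h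
    simpa [add_assoc, addself] using this)
  rw [← ncard_coe, coe_pairSub]
  rw [Set.ncard_insert_of_notMem (by intro h; rcases h with h | h | h <;> [exact ha h.symm; exact hb h.symm; exact hab0 h.symm]),
      Set.ncard_insert_of_notMem (by simp; tauto),
      Set.ncard_insert_of_notMem (by simpa using habb.symm), Set.ncard_singleton]

-- decidable computational facts about A73mat
lemma hfixA : ∀ x : V7, x ᵥ* A73mat = x ↔ x ∈ Fsub := by decide

lemma hNF : ∀ x : V7, x + (x ᵥ* A73mat + (x ᵥ* A73mat) ᵥ* A73mat) ∈ Fsub := by decide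

lemma hMK : ∀ x : V7, x ᵥ* A73mat + (x ᵥ* A73mat) ᵥ* A73mat ∈ Ksub := by decide

lemma hMne : ∀ x : V7, x ∉ Fsub → x ᵥ* A73mat + (x ᵥ* A73mat) ᵥ* A73mat ≠ 0 := by decide

lemma hKA : ∀ u : V7, u ∈ Ksub → u ᵥ* A73mat ∈ Ksub := by decide

lemma hK2 : ∀ u : V7, u ∈ Ksub → (u ᵥ* A73mat) ᵥ* A73mat = u + u ᵥ* A73mat := by decide

lemma hvecMul_ne : ∀ u : V7, u ≠ 0 → u ᵥ* A73mat ≠ 0 := by decide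

lemma hA3 : A73mat * (A73mat * A73mat) = 1 := by decide

def gen : Fin 5 → V7 :=
  ![![1,0,0,0,0,0,0], ![0,0,1,0,0,0,0], ![1,0,1,0,0,0,0], ![1,0,0,1,0,0,0], ![1,0,1,1,0,0,0]]

def lineF (u : V7) : Finset V7 := {0, u, u ᵥ* A73mat, u + u ᵥ* A73mat}

lemma hline : ∀ u : V7, u ∈ Ksub → u ≠ 0 → ∃ i : Fin 5, lineF u = lineF (gen i) := by decide

lemma genK : ∀ i : Fin 5, gen i ∈ Ksub ∧ gen i ≠ 0 ∧ gen i ᵥ* A73mat ≠ 0 ∧ gen i ᵥ* A73mat ≠ gen i ∧ gen i ∉ Fsub := by decide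

lemma mem_lineF {u x : V7} : x ∈ lineF u ↔ (x = 0 ∨ x = u ∨ x = u ᵥ* A73mat ∨ x = u + u ᵥ* A73mat) := by
  simp [lineF, Finset.mem_insert, Finset.mem_singleton]

lemma mem_pairSub_lineF {u x : V7} : x ∈ pairSub u (u ᵥ* A73mat) ↔ x ∈ lineF u := by
  rw [mem_pairSub, mem_lineF]

lemma card_Fsub : Nat.card ↥Fsub = 8 := by
  rw [Nat.card_eq_fintype_card]
  decide

lemma finrank_Fsub : Module.finrank (ZMod 2) Fsub = 3 :=
  finrank_eq_of_card (by rw [card_Fsub]; norm_num)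

lemma e45_facts : (![0,0,0,0,1,0,0] : V7) ∈ Fsub ∧ (![0,0,0,0,0,1,0] : V7) ∈ Fsub ∧
    (![0,0,0,0,1,0,0] : V7) ≠ 0 ∧ (![0,0,0,0,0,1,0] : V7) ≠ 0 ∧
    (![0,0,0,0,1,0,0] : V7) ≠ ![0,0,0,0,0,1,0] ∧
    (![0,0,0,0,1,0,0] : V7) ᵥ* A73mat = ![0,0,0,0,1,0,0] ∧
    (![0,0,0,0,0,1,0] : V7) ᵥ* A73mat = ![0,0,0,0,0,1,0] := by decide

lemma mem_mapMat {A : Matrix (Fin 7) (Fin 7) (ZMod 2)} {W : Submodule (ZMod 2) V7} {x : V7} :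
    x ∈ mapMat A W ↔ ∃ y ∈ W, y ᵥ* A = x := by
  simp [mapMat, Submodule.mem_map, Matrix.vecMulLinear_apply]

lemma mapMat_comp (P Q : Matrix (Fin 7) (Fin 7) (ZMod 2)) (W : Submodule (ZMod 2) V7) :
    mapMat Q (mapMat P W) = mapMat (P * Q) W := by
  unfold mapMat
  rw [← Submodule.map_comp]
  congr 1
  apply LinearMap.ext
  intro x
  simp [Matrix.vecMul_vecMul]

lemma mapMat_one (W : Submodule (ZMod 2) V7) : mapMat 1 W = W := by
  apply SetLike.ext
  intro x
  rw [mem_mapMat]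
  constructor
  · rintro ⟨y, hy, rfl⟩; rwa [Matrix.vecMul_one]
  · intro hx; exact ⟨x, hx, Matrix.vecMul_one x⟩

lemma mapMat_cube (W : Submodule (ZMod 2) V7) :
    mapMat A73mat (mapMat A73mat (mapMat A73mat W)) = W := by
  rw [mapMat_comp, mapMat_comp, hA3, mapMat_one]

lemma mapMat_pairSub (A : Matrix (Fin 7) (Fin 7) (ZMod 2)) (a b : V7) :
    mapMat A (pairSub a b) = pairSub (a ᵥ* A) (b ᵥ* A) := by
  apply SetLike.ext
  intro x
  rw [mem_mapMat, mem_pairSub]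
  constructor
  · rintro ⟨y, hy, rfl⟩
    rcases (mem_pairSub.mp hy) with rfl | rfl | rfl | rfl
    · left; exact Matrix.zero_vecMul A
    · right; left; rfl
    · right; right; left; rfl
    · right; right; right; exact Matrix.add_vecMul A a b
  · rintro (rfl | rfl | rfl | rfl)
    · exact ⟨0, zero_mem _, Matrix.zero_vecMul A⟩
    · exact ⟨a, mem_pairSub.mpr (Or.inr (Or.inl rfl)), rfl⟩
    · exact ⟨b, mem_pairSub.mpr (Or.inr (Or.inr (Or.inl rfl))), rfl⟩
    · exact ⟨a + b, mem_pairSub.mpr (Or.inr (Or.inr (Or.inr rfl))), Matrix.add_vecMul A a b⟩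

lemma mapMat_line {u : V7} (hu : u ∈ Ksub) :
    mapMat A73mat (pairSub u (u ᵥ* A73mat)) = pairSub u (u ᵥ* A73mat) := by
  rw [mapMat_pairSub, hK2 u hu, pairSub_rot]

lemma mapMat_Fsub : mapMat A73mat Fsub = Fsub := by
  apply SetLike.ext
  intro x
  rw [mem_mapMat]
  constructor
  · rintro ⟨y, hy, rfl⟩
    rwa [(hfixA y).mpr hy]
  · intro hx
    exact ⟨x, hx, (hfixA x).mpr hx⟩

lemma triple_dvd {α : Type*} [DecidableEq α] (σ : α → α) (hσ : ∀ x, σ (σ (σ x)) = x) :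
    ∀ s : Finset α, (∀ x ∈ s, σ x ∈ s) → (∀ x ∈ s, σ x ≠ x) → 3 ∣ s.card := by
  have hinj : Function.Injective σ := fun x y h => by
    have := congrArg (fun z => σ (σ z)) h
    simpa [hσ] using this
  intro s
  induction s using Finset.strongInduction with
  | _ s ih =>
    intro hc hn
    rcases s.eq_empty_or_nonempty with rfl | ⟨a, ha⟩
    · simp
    · have h1 : σ a ≠ a := hn a ha
      have h2 : σ (σ a) ≠ a := by
        intro h
        have := congrArg σ h
        rw [hσ] at this
        exact h1 this.symm
      have h3 : σ (σ a) ≠ σ a := fun h => h1 (hinj h)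
      set u : Finset α := {a, σ a, σ (σ a)} with hu
      have hus : u ⊆ s := by
        intro x hx
        rcases Finset.mem_insert.mp hx with rfl | hx
        · exact ha
        rcases Finset.mem_insert.mp hx with rfl | hx
        · exact hc a ha
        rw [Finset.mem_singleton.mp hx]
        exact hc _ (hc a ha)
      have hucard : u.card = 3 := by
        rw [hu, Finset.card_insert_of_notMem (by simp [h1.symm, h2.symm]),
          Finset.card_insert_of_notMem (by simp [h3.symm]), Finset.card_singleton]
      have htsub : s \ u ⊂ s := Finset.sdiff_ssubset (by exact_mod_cast hus) (by simp [hu])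
      have hclosed : ∀ x ∈ s \ u, σ x ∈ s \ u := by
        intro x hx
        obtain ⟨hxs, hxu⟩ := Finset.mem_sdiff.mp hx
        refine Finset.mem_sdiff.mpr ⟨hc x hxs, ?_⟩
        intro hmem
        simp only [hu, Finset.mem_insert, Finset.mem_singleton] at hmem hxu
        rcases hmem with h | h | h
        · refine hxu (Or.inr (Or.inr ?_))
          have h' := congrArg (fun z => σ (σ z)) h
          rw [hσ] at h'
          exact h'
        · exact hxu (Or.inl (hinj h))
        · exact hxu (Or.inr (Or.inl (hinj h)))
      have hdvd := ih (s \ u) htsub hclosed (fun x hx => hn x (Finset.mem_sdiff.mp hx).1)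
      have hcard : (s \ u).card = s.card - 3 := by
        rw [Finset.card_sdiff_of_subset hus, hucard]
      have hle : 3 ≤ s.card := hucard ▸ Finset.card_le_card hus
      omega

set_option maxRecDepth 100000
set_option maxHeartbeats 1000000

/-- There is no binary q-analog of the Fano plane invariant under the group
generated by `A_{7,3}`. -/
theorem stmt14 :
    ¬ ∃ D : Set (Submodule (ZMod 2) (Fin 7 → ZMod 2)), IsSTS 7 D ∧
      ∀ A ∈ Subgroup.closure {A73},
        (mapMat ((A : GL (Fin 7) (ZMod 2)) : Matrix (Fin 7) (Fin 7) (ZMod 2))) '' D = D := by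
  classical
  rintro ⟨D, ⟨h1, h2⟩, h3⟩
  have hDinv : ∀ B ∈ D, mapMat A73mat B ∈ D := by
    have hmem : A73 ∈ Subgroup.closure ({A73} : Set (GL (Fin 7) (ZMod 2))) :=
      Subgroup.subset_closure (Set.mem_singleton _)
    have him := h3 A73 hmem
    intro B hB
    have h' : mapMat ((A73 : GL (Fin 7) (ZMod 2)) : Matrix (Fin 7) (Fin 7) (ZMod 2)) B ∈ D := by
      rw [← him]; exact Set.mem_image_of_mem _ hB
    exact h'
  set σ : Submodule (ZMod 2) V7 → Submodule (ZMod 2) V7 := mapMat A73mat with hσdef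
  have hmemσ : ∀ (W : Submodule (ZMod 2) V7) (x : V7), x ∈ W → x ᵥ* A73mat ∈ σ W :=
    fun W x hx => mem_mapMat.mpr ⟨x, hx, rfl⟩
  have hσcube : ∀ W, σ (σ (σ W)) = W := mapMat_cube
  have hσinj : ∀ {P Q : Submodule (ZMod 2) V7}, σ P = σ Q → P = Q := by
    intro P Q h
    have h' := congrArg (fun W => σ (σ W)) h
    rw [hσcube, hσcube] at h'
    exact h'
  have hB8 : ∀ B ∈ D, Nat.card ↥B = 8 := fun B hB => by
    rw [card_eq_two_pow_finrank, h1 B hB]; norm_num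
  have hrank2 : ∀ a b : V7, a ≠ 0 → b ≠ 0 → a ≠ b →
      Module.finrank (ZMod 2) (pairSub a b) = 2 :=
    fun a b ha hb hab => finrank_eq_of_card (by rw [ncard_pairSub ha hb hab]; norm_num)
  have hfixblk : ∀ L : Submodule (ZMod 2) V7, Module.finrank (ZMod 2) L = 2 → σ L = L →
      ∃ B, (B ∈ D ∧ L ≤ B) ∧ σ B = B ∧ ∀ B', B' ∈ D → L ≤ B' → B' = B := by
    intro L hL hLfix
    obtain ⟨B, ⟨hBD, hLB⟩, hu⟩ := h2 L hL
    have hu' : ∀ B', B' ∈ D → L ≤ B' → B' = B := fun B' hB' hLB' => hu B' ⟨hB', hLB'⟩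
    have hfix : σ B = B := by
      refine hu' (σ B) (hDinv B hBD) ?_
      conv_lhs => rw [← hLfix]
      exact Submodule.map_mono hLB
    exact ⟨B, ⟨hBD, hLB⟩, hfix, hu'⟩
  have hranks : ∀ (B P Q : Submodule (ZMod 2) V7), B ∈ D → P ≤ B → Q ≤ B →
      (∀ x ∈ P, x ∈ Fsub) → (∀ x ∈ Q, x ∈ Ksub) →
      Module.finrank (ZMod 2) P + Module.finrank (ZMod 2) Q ≤ 3 := by
    intro B P Q hBD hPB hQB hPF hQK
    have hPQ : P ⊓ Q = ⊥ := by
      refine eq_bot_iff.mpr ?_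
      intro x hx
      obtain ⟨hxP, hxQ⟩ := Submodule.mem_inf.mp hx
      simpa [Submodule.mem_bot] using FK0 x (hPF x hxP) (hQK x hxQ)
    have hsum := Submodule.finrank_sup_add_finrank_inf_eq P Q
    rw [hPQ] at hsum
    simp only [finrank_bot, add_zero] at hsum
    rw [← hsum]
    calc Module.finrank (ZMod 2) ↥(P ⊔ Q) ≤ Module.finrank (ZMod 2) ↥B :=
          Submodule.finrank_mono (sup_le hPB hQB)
      _ = 3 := h1 B hBD
  have hlinesub : ∀ (B : Submodule (ZMod 2) V7), σ B = B → ∀ u : V7, u ∈ B → u ∈ Ksub → u ≠ 0 →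
      pairSub u (u ᵥ* A73mat) ≤ B ∧ Module.finrank (ZMod 2) (pairSub u (u ᵥ* A73mat)) = 2 ∧
      (∀ x ∈ pairSub u (u ᵥ* A73mat), x ∈ Ksub) := by
    intro B hBfix u huB huK hu0
    have huA : u ᵥ* A73mat ∈ B := by rw [← hBfix]; exact hmemσ B u huB
    have huAne : u ᵥ* A73mat ≠ u := by
      intro h
      exact hu0 (FK0 u ((hfixA u).mp h) huK)
    refine ⟨?_, hrank2 u _ hu0 (hvecMul_ne u hu0) (Ne.symm huAne), ?_⟩
    · intro x hx
      rcases mem_pairSub.mp hx with rfl | rfl | rfl | rfl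
      · exact zero_mem B
      · exact huB
      · exact huA
      · exact add_mem huB huA
    · intro x hx
      rcases mem_pairSub.mp hx with rfl | rfl | rfl | rfl
      · exact zero_mem Ksub
      · exact huK
      · exact hKA u huK
      · exact add_mem huK (hKA u huK)
  -- Step 1 : Fsub ∈ D
  obtain ⟨e4F, e5F, e40, e50, e45, e4fix, e5fix⟩ := e45_facts
  set L0 : Submodule (ZMod 2) V7 := pairSub ![0,0,0,0,1,0,0] ![0,0,0,0,0,1,0] with hL0
  have hL0fix : σ L0 = L0 := by
    rw [hσdef, hL0, mapMat_pairSub, e4fix, e5fix]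
  obtain ⟨B0, ⟨hB0D, hL0B0⟩, hB0fix, hB0u⟩ := hfixblk L0 (hrank2 _ _ e40 e50 e45) hL0fix
  have hL0F : ∀ x ∈ L0, x ∈ Fsub := by
    intro x hx
    rcases mem_pairSub.mp hx with rfl | rfl | rfl | rfl
    · exact zero_mem Fsub
    · exact e4F
    · exact e5F
    · exact add_mem e4F e5F
  have hB0K : ∀ u : V7, u ∈ B0 → u ∈ Ksub → u = 0 := by
    intro u huB huK
    by_contra hu0
    obtain ⟨hle, hr2, hK⟩ := hlinesub B0 hB0fix u huB huK hu0
    have hcon := hranks B0 L0 _ hB0D hL0B0 hle hL0F hK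
    rw [hrank2 _ _ e40 e50 e45, hr2] at hcon
    omega
  have hB0F : B0 = Fsub := by
    have hle : B0 ≤ Fsub := by
      intro w hw
      have hwA : w ᵥ* A73mat ∈ B0 := by rw [← hB0fix]; exact hmemσ B0 w hw
      have hwA2 : (w ᵥ* A73mat) ᵥ* A73mat ∈ B0 := by rw [← hB0fix]; exact hmemσ B0 _ hwA
      have hM0 : w ᵥ* A73mat + (w ᵥ* A73mat) ᵥ* A73mat = 0 := hB0K _ (add_mem hwA hwA2) (hMK w)
      have hN := hNF w
      rw [hM0, add_zero] at hN
      exact hN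
    exact Submodule.eq_of_le_of_finrank_eq hle (by rw [h1 B0 hB0D, finrank_Fsub])
  have hFD : Fsub ∈ D := hB0F ▸ hB0D
  -- Step 2 : the five line-blocks
  have hCex : ∀ i : Fin 5, ∃ B, (B ∈ D ∧ pairSub (gen i) (gen i ᵥ* A73mat) ≤ B) ∧ σ B = B ∧
      ∀ B', B' ∈ D → pairSub (gen i) (gen i ᵥ* A73mat) ≤ B' → B' = B := by
    intro i
    obtain ⟨hK, h0, hA0, hAne, hnF⟩ := genK i
    exact hfixblk _ (hrank2 _ _ h0 hA0 (Ne.symm hAne)) (mapMat_line hK)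
  choose C hC1 hC2 hC3 using hCex
  have hsmallF : ∀ i : Fin 5, ∀ g g' : V7, g ∈ C i → g ∈ Fsub → g ≠ 0 →
      g' ∈ C i → g' ∈ Fsub → g' ≠ 0 → g = g' := by
    intro i g g' hg hgF hg0 hg' hg'F hg'0
    by_contra hne
    obtain ⟨hK, h0, hA0, hAne, hnF⟩ := genK i
    have hgenCi : gen i ∈ C i := (hC1 i).2 (mem_pairSub.mpr (Or.inr (Or.inl rfl)))
    obtain ⟨hle, hr2, hKs⟩ := hlinesub (C i) (hC2 i) (gen i) hgenCi hK h0
    have hPle : pairSub g g' ≤ C i := by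
      intro x hx
      rcases mem_pairSub.mp hx with rfl | rfl | rfl | rfl
      · exact zero_mem _
      · exact hg
      · exact hg'
      · exact add_mem hg hg'
    have hPF : ∀ x ∈ pairSub g g', x ∈ Fsub := by
      intro x hx
      rcases mem_pairSub.mp hx with rfl | rfl | rfl | rfl
      · exact zero_mem Fsub
      · exact hgF
      · exact hg'F
      · exact add_mem hgF hg'F
    have hcon := hranks (C i) (pairSub g g') _ (hC1 i).1 hPle hle hPF hKs
    rw [hrank2 _ _ hg0 hg'0 hne, hr2] at hcon
    omega
  -- Step 3 : choose f in F* avoiding all C i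
  have hfex : ∃ f : V7, f ∈ Fsub ∧ f ≠ 0 ∧ ∀ i : Fin 5, f ∉ C i := by
    by_contra hcon
    push_neg at hcon
    have hchoice : ∀ g : V7, ∃ i : Fin 5, g ∈ Fsub → g ≠ 0 → g ∈ C i := by
      intro g
      by_cases hg : g ∈ Fsub ∧ g ≠ 0
      · obtain ⟨i, hi⟩ := hcon g hg.1 hg.2
        exact ⟨i, fun _ _ => hi⟩
      · exact ⟨0, fun hF h0 => absurd ⟨hF, h0⟩ hg⟩
    choose χ hχ using hchoice
    have hinj : Set.InjOn χ ↑(Finset.univ.filter (fun x : V7 => x ∈ Fsub ∧ x ≠ 0)) := by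
      intro g hg g' hg' heq
      simp only [Finset.coe_filter, Finset.mem_univ, true_and, Set.mem_setOf_eq] at hg hg'
      have hgC : g ∈ C (χ g) := hχ g hg.1 hg.2
      have hg'C : g' ∈ C (χ g) := by rw [heq]; exact hχ g' hg'.1 hg'.2
      exact hsmallF (χ g) g g' hgC hg.1 hg.2 hg'C hg'.1 hg'.2
    have hcard := Finset.card_le_card_of_injOn χ (fun a _ => Finset.mem_univ (χ a)) hinj
    have h7 : (Finset.univ.filter (fun x : V7 => x ∈ Fsub ∧ x ≠ 0)).card = 7 := by decide
    rw [h7, Finset.card_univ, Fintype.card_fin] at hcard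
    omega
  obtain ⟨f, hfF, hf0, hfC⟩ := hfex
  -- Step 4 : classification of fixed blocks through f
  have hclass : ∀ B, B ∈ D → σ B = B → f ∈ B → B = Fsub := by
    intro B hBD hBfix hfB
    by_contra hne
    have hex : ∃ w, w ∈ B ∧ w ∉ Fsub := by
      by_contra hcon
      push_neg at hcon
      exact hne (Submodule.eq_of_le_of_finrank_eq hcon (by rw [h1 B hBD, finrank_Fsub]))
    obtain ⟨w, hwB, hwF⟩ := hex
    have hwA : w ᵥ* A73mat ∈ B := by rw [← hBfix]; exact hmemσ B w hwB
    have hwA2 : (w ᵥ* A73mat) ᵥ* A73mat ∈ B := by rw [← hBfix]; exact hmemσ B _ hwA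
    set u : V7 := w ᵥ* A73mat + (w ᵥ* A73mat) ᵥ* A73mat with hu
    have huB : u ∈ B := add_mem hwA hwA2
    have huK : u ∈ Ksub := hMK w
    have hu0 : u ≠ 0 := hMne w hwF
    have huA : u ᵥ* A73mat ∈ B := by rw [← hBfix]; exact hmemσ B u huB
    obtain ⟨i, hi⟩ := hline u huK hu0
    have hLiB : pairSub (gen i) (gen i ᵥ* A73mat) ≤ B := by
      intro x hx
      have hx' : x ∈ lineF (gen i) := mem_pairSub_lineF.mp hx
      rw [← hi] at hx'
      rcases mem_lineF.mp hx' with rfl | rfl | rfl | rfl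
      · exact zero_mem B
      · exact huB
      · exact huA
      · exact add_mem huB huA
    have hBC := hC3 i B hBD hLiB
    exact hfC i (hBC ▸ hfB)
  -- Step 5 : counting blocks through f
  have hfpair : ∀ g : V7, g ≠ 0 → g ≠ f → ∃! B, B ∈ D ∧ pairSub f g ≤ B :=
    fun g hg0 hgf => h2 _ (hrank2 f g hf0 hg0 (fun h => hgf h.symm))
  set φ : V7 → Submodule (ZMod 2) V7 := fun g =>
    if h : ∃! B, B ∈ D ∧ pairSub f g ≤ B then h.choose else ⊥ with hφ
  have hφspec : ∀ g : V7, g ≠ 0 → g ≠ f →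
      (φ g ∈ D ∧ pairSub f g ≤ φ g) ∧ ∀ B, B ∈ D → pairSub f g ≤ B → B = φ g := by
    intro g hg0 hgf
    have h := hfpair g hg0 hgf
    have heq : φ g = h.choose := by
      rw [hφ]
      simp only
      rw [dif_pos h]
    rw [heq]
    exact ⟨h.choose_spec.1, fun B hB hle => h.choose_spec.2 B ⟨hB, hle⟩⟩
  set Sfin : Finset V7 := (Finset.univ.erase 0).erase f with hS
  have hSmem : ∀ g : V7, g ∈ Sfin ↔ (g ≠ f ∧ g ≠ 0) := by
    intro g
    rw [hS]
    simp [Finset.mem_erase, and_assoc]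
  have hScard : Sfin.card = 126 := by
    rw [hS, Finset.card_erase_of_mem (Finset.mem_erase.mpr ⟨hf0, Finset.mem_univ f⟩),
        Finset.card_erase_of_mem (Finset.mem_univ 0), Finset.card_univ]
    have h128 : Fintype.card V7 = 128 := by decide
    rw [h128]
  set Tfin : Finset (Submodule (ZMod 2) V7) := Sfin.image φ with hT
  have hTmem : ∀ B, B ∈ Tfin ↔ (B ∈ D ∧ f ∈ B) := by
    intro B
    constructor
    · intro hB
      obtain ⟨g, hgS, rfl⟩ := Finset.mem_image.mp hB
      obtain ⟨hgf, hg0⟩ := (hSmem g).mp hgS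
      obtain ⟨⟨hD', hle⟩, _⟩ := hφspec g hg0 hgf
      exact ⟨hD', hle (mem_pairSub.mpr (Or.inr (Or.inl rfl)))⟩
    · rintro ⟨hBD, hfB⟩
      have hcard8 : (B : Set V7).ncard = 8 := by rw [ncard_coe]; exact hB8 B hBD
      have hex : ∃ g, g ∈ (B : Set V7) ∧ g ≠ 0 ∧ g ≠ f := by
        by_contra hcon
        push_neg at hcon
        have hsub : (B : Set V7) ⊆ {0, f} := by
          intro x hx
          rcases eq_or_ne x 0 with rfl | hx0
          · exact Set.mem_insert _ _
          · exact Set.mem_insert_iff.mpr (Or.inr (hcon x hx hx0))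
        have hle2 := Set.ncard_le_ncard hsub (Set.toFinite _)
        have h2' : ({0, f} : Set V7).ncard ≤ 2 := by
          refine le_trans (Set.ncard_insert_le _ _) ?_
          simp
        omega
      obtain ⟨g, hgB, hg0, hgf⟩ := hex
      have hspec := hφspec g hg0 hgf
      have hBg : B = φ g := by
        refine hspec.2 B hBD ?_
        intro x hx
        rcases mem_pairSub.mp hx with rfl | rfl | rfl | rfl
        · exact zero_mem B
        · exact hfB
        · exact hgB
        · exact add_mem hfB hgB
      exact Finset.mem_image.mpr ⟨g, (hSmem g).mpr ⟨hgf, hg0⟩, hBg.symm⟩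
  have hfiber : ∀ B ∈ Tfin, (Sfin.filter (fun g => φ g = B)).card = 6 := by
    intro B hB
    obtain ⟨hBD, hfB⟩ := (hTmem B).mp hB
    have hseteq : ↑(Sfin.filter (fun g => φ g = B)) = (B : Set V7) \ {0, f} := by
      ext g
      simp only [Finset.coe_filter, Set.mem_setOf_eq, Set.mem_diff, Set.mem_insert_iff,
        Set.mem_singleton_iff, SetLike.mem_coe]
      constructor
      · rintro ⟨hgS, hφg⟩
        obtain ⟨hgf, hg0⟩ := (hSmem g).mp hgS
        constructor
        · have hgmem := (hφspec g hg0 hgf).1.2 (mem_pairSub.mpr (Or.inr (Or.inr (Or.inl rfl))))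
          rwa [hφg] at hgmem
        · rintro (rfl | rfl)
          · exact hg0 rfl
          · exact hgf rfl
      · rintro ⟨hgB, hne⟩
        push_neg at hne
        obtain ⟨hg0, hgf⟩ := hne
        refine ⟨(hSmem g).mpr ⟨hgf, hg0⟩, ?_⟩
        refine ((hφspec g hg0 hgf).2 B hBD ?_).symm
        intro x hx
        rcases mem_pairSub.mp hx with rfl | rfl | rfl | rfl
        · exact zero_mem B
        · exact hfB
        · exact hgB
        · exact add_mem hfB hgB
    have hcardeq := congrArg Set.ncard hseteq
    rw [Set.ncard_coe_finset] at hcardeq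
    rw [hcardeq, Set.ncard_diff (by
      intro x hx
      rcases Set.mem_insert_iff.mp hx with rfl | hx'
      · exact zero_mem B
      · rw [Set.mem_singleton_iff.mp hx']; exact hfB)]
    rw [ncard_coe, hB8 B hBD]
    have h2' : ({0, f} : Set V7).ncard = 2 := by
      rw [Set.ncard_insert_of_notMem (by
        simp only [Set.mem_singleton_iff]
        exact fun h => hf0 h.symm), Set.ncard_singleton]
    rw [h2']
  have hsum := Finset.card_eq_sum_card_image φ Sfin
  rw [hScard, ← hT] at hsum
  have hsum6 : ∑ B ∈ Tfin, (Sfin.filter (fun g => φ g = B)).card = 6 * Tfin.card := by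
    rw [Finset.sum_congr rfl (fun B hB => hfiber B hB), Finset.sum_const, smul_eq_mul, mul_comm]
  rw [hsum6] at hsum
  have hT21 : Tfin.card = 21 := by omega
  -- Step 6 : the orbit count modulo 3
  have hFT : Fsub ∈ Tfin := (hTmem Fsub).mpr ⟨hFD, hfF⟩
  have hffix : f ᵥ* A73mat = f := (hfixA f).mpr hfF
  have hσT : ∀ B ∈ Tfin, σ B ∈ Tfin := by
    intro B hB
    obtain ⟨hBD, hfB⟩ := (hTmem B).mp hB
    refine (hTmem (σ B)).mpr ⟨hDinv B hBD, ?_⟩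
    have hm := hmemσ B f hfB
    rwa [hffix] at hm
  have hσFsub : σ Fsub = Fsub := mapMat_Fsub
  have herase_closed : ∀ B ∈ Tfin.erase Fsub, σ B ∈ Tfin.erase Fsub := by
    intro B hB
    obtain ⟨hne, hBT⟩ := Finset.mem_erase.mp hB
    refine Finset.mem_erase.mpr ⟨?_, hσT B hBT⟩
    intro h
    exact hne (hσinj (h.trans hσFsub.symm))
  have herase_nofix : ∀ B ∈ Tfin.erase Fsub, σ B ≠ B := by
    intro B hB h
    obtain ⟨hne, hBT⟩ := Finset.mem_erase.mp hB
    obtain ⟨hBD, hfB⟩ := (hTmem B).mp hBT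
    exact hne (hclass B hBD h hfB)
  have hdvd := triple_dvd σ hσcube (Tfin.erase Fsub) herase_closed herase_nofix
  rw [Finset.card_erase_of_mem hFT, hT21] at hdvd
  omega
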